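/- Let D be a closed disc whose boundary passes through distinct points p and q, and let r be a point in the open interior of D that does not lie on the line through p and q. Let H be the open halfplane bounded by line pq that contains r, and H' the opposite open halfplane. Then the closed circumdisc B of p, q, r satisfies B ∩ H ⊆ D ∩ H and D ∩ H' ⊆ B ∩ H'. -/
import Mathlib


noncomputable section

/-- Points of the Euclidean plane. -/
abbrev Pt := EuclideanSpace ℝ (Fin 2)

/-- The orientation (cross product) determinant of the triple `(p, q, r)`. -/
def orient (p q r : Pt) : ℝ :=
  (q 0 - p 0) * (r 1 - p 1) - (q 1 - p 1) * (r 0 - p 0)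

lemma dist_sq (x y : Pt) : dist x y ^ 2 = (x 0 - y 0)^2 + (x 1 - y 1)^2 := by
  rw [EuclideanSpace.dist_eq, Real.sq_sqrt (by positivity)]
  simp [Fin.sum_univ_two, Real.dist_eq, sq_abs]

lemma key (p0 p1 q0 q1 r0 r1 x0 x1 c0 c1 d0 d1 ρ σ : ℝ)
    (hp : (p0-c0)^2+(p1-c1)^2 = ρ^2) (hq : (q0-c0)^2+(q1-c1)^2 = ρ^2)
    (hp' : (p0-d0)^2+(p1-d1)^2 = σ^2) (hq' : (q0-d0)^2+(q1-d1)^2 = σ^2) :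
    ((x0-c0)^2+(x1-c1)^2 - ρ^2 - ((x0-d0)^2+(x1-d1)^2 - σ^2)) *
      ((q0-p0)*(r1-p1)-(q1-p1)*(r0-p0))
    = ((r0-c0)^2+(r1-c1)^2 - ρ^2 - ((r0-d0)^2+(r1-d1)^2 - σ^2)) *
      ((q0-p0)*(x1-p1)-(q1-p1)*(x0-p0)) := by
  linear_combination ((x0-p0)*(r1-p1)-(r0-p0)*(x1-p1)) * (hq - hq') +
    (((q0-p0)*(r1-p1)-(q1-p1)*(r0-p0)) - ((q0-p0)*(x1-p1)-(q1-p1)*(x0-p0))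
      - ((x0-p0)*(r1-p1)-(r0-p0)*(x1-p1))) * (hp - hp')

lemma side (Fx Fpx Fr orr orx : ℝ) (hK : (Fx - Fpx) * orr = Fr * orx)
    (h1 : Fpx ≤ 0) (h2 : Fr < 0) (h3 : 0 < orr * orx) : Fx ≤ 0 := by
  have h0 : orr ≠ 0 := by rintro rfl; simp at h3
  have h4 : 0 < orr ^ 2 := by positivity
  have h5 : (Fx - Fpx) * orr * orr = Fr * orx * orr := by rw [hK]
  nlinarith [h5, mul_le_mul_of_nonneg_right h1 h4.le, mul_neg_of_neg_of_pos h2 h3]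

/-- Let `D` be a closed disc with the distinct points `p, q` on its boundary circle, and
let `r` be a point of the open interior of `D` not on the line `pq`.  Let `H` be the open
halfplane of the line `pq` containing `r` (the points `x` with
`orient p q r * orient p q x > 0`) and `H'` the opposite one.  Then the (unique) closed
circumdisc `B` of `p, q, r` satisfies `B ∩ H ⊆ D ∩ H` and `D ∩ H' ⊆ B ∩ H'`. -/
theorem stmt6 (p q r c : Pt) (ρ : ℝ) (hpq : p ≠ q)
    (hp : dist p c = ρ) (hq : dist q c = ρ)
    (hr : dist r c < ρ) (hrline : orient p q r ≠ 0) :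
    ∀ c' : Pt, ∀ ρ' : ℝ, dist p c' = ρ' → dist q c' = ρ' → dist r c' = ρ' →
      (Metric.closedBall c' ρ' ∩ {x : Pt | 0 < orient p q r * orient p q x} ⊆
          Metric.closedBall c ρ ∩ {x : Pt | 0 < orient p q r * orient p q x}) ∧
      (Metric.closedBall c ρ ∩ {x : Pt | orient p q r * orient p q x < 0} ⊆
          Metric.closedBall c' ρ' ∩ {x : Pt | orient p q r * orient p q x < 0}) := by
  intro c' ρ' hp' hq' hr'
  have hρ0 : 0 ≤ ρ := hp ▸ dist_nonneg
  have hρ'0 : 0 ≤ ρ' := hp' ▸ dist_nonneg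
  have ep : (p 0 - c 0)^2 + (p 1 - c 1)^2 = ρ^2 := by rw [← dist_sq, hp]
  have eq1 : (q 0 - c 0)^2 + (q 1 - c 1)^2 = ρ^2 := by rw [← dist_sq, hq]
  have ep' : (p 0 - c' 0)^2 + (p 1 - c' 1)^2 = ρ'^2 := by rw [← dist_sq, hp']
  have eq1' : (q 0 - c' 0)^2 + (q 1 - c' 1)^2 = ρ'^2 := by rw [← dist_sq, hq']
  have er' : (r 0 - c' 0)^2 + (r 1 - c' 1)^2 = ρ'^2 := by rw [← dist_sq, hr']
  have er : (r 0 - c 0)^2 + (r 1 - c 1)^2 < ρ^2 := by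
    rw [← dist_sq]; exact pow_lt_pow_left₀ hr dist_nonneg (by norm_num)
  have h2 : (r 0 - c 0)^2 + (r 1 - c 1)^2 - ρ^2 < 0 := by linarith
  constructor
  · rintro x ⟨hx1, hx2⟩
    have hx1' : (x 0 - c' 0)^2 + (x 1 - c' 1)^2 - ρ'^2 ≤ 0 := by
      have := pow_le_pow_left₀ dist_nonneg (Metric.mem_closedBall.mp hx1) 2
      rw [dist_sq] at this; linarith
    refine ⟨Metric.mem_closedBall.mpr ?_, hx2⟩
    have hKx := key (p 0) (p 1) (q 0) (q 1) (r 0) (r 1) (x 0) (x 1)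
      (c 0) (c 1) (c' 0) (c' 1) ρ ρ' ep eq1 ep' eq1'
    have hK : ((x 0 - c 0)^2 + (x 1 - c 1)^2 - ρ^2
          - ((x 0 - c' 0)^2 + (x 1 - c' 1)^2 - ρ'^2)) * orient p q r
        = ((r 0 - c 0)^2 + (r 1 - c 1)^2 - ρ^2) * orient p q x := by
      simp only [orient]
      linear_combination hKx - ((q 0 - p 0)*(x 1 - p 1)-(q 1 - p 1)*(x 0 - p 0)) * er'
    have hmain := side _ _ _ _ _ hK hx1' h2 hx2
    have : dist x c ^ 2 ≤ ρ ^ 2 := by rw [dist_sq]; linarith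
    exact le_of_pow_le_pow_left₀ (by norm_num) hρ0 this
  · rintro x ⟨hx1, hx2⟩
    have hx1' : (x 0 - c 0)^2 + (x 1 - c 1)^2 - ρ^2 ≤ 0 := by
      have := pow_le_pow_left₀ dist_nonneg (Metric.mem_closedBall.mp hx1) 2
      rw [dist_sq] at this; linarith
    refine ⟨Metric.mem_closedBall.mpr ?_, hx2⟩
    have hKx := key (p 0) (p 1) (q 0) (q 1) (r 0) (r 1) (x 0) (x 1)
      (c 0) (c 1) (c' 0) (c' 1) ρ ρ' ep eq1 ep' eq1'
    have hK : ((x 0 - c' 0)^2 + (x 1 - c' 1)^2 - ρ'^2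
          - ((x 0 - c 0)^2 + (x 1 - c 1)^2 - ρ^2)) * orient p q r
        = ((r 0 - c 0)^2 + (r 1 - c 1)^2 - ρ^2) * (-(orient p q x)) := by
      simp only [orient]
      linear_combination -hKx + ((q 0 - p 0)*(x 1 - p 1)-(q 1 - p 1)*(x 0 - p 0)) * er'
    have h3 : 0 < orient p q r * (-(orient p q x)) := by
      rw [mul_neg]; exact neg_pos.mpr hx2
    have hmain := side _ _ _ _ _ hK hx1' h2 h3
    have : dist x c' ^ 2 ≤ ρ' ^ 2 := by rw [dist_sq]; linarith
    exact le_of_pow_le_pow_left₀ (by norm_num) hρ'0 this
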